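/- Let I = (g₀, …, g_t) be a homogeneous ideal in a graded polynomial ring S over a field, graded by an abelian group A, and let α ∈ A. Suppose for each i the set M_i of monomials of degree α − deg gᵢ generates an ideal whose saturation with respect to an ideal B equals (1) [i.e., the monomials of that degree have no common zero outside V(B)]. Then the ideal generated by I(α) := I ∩ S_α satisfies (⟨I(α)⟩ : B^∞) = (I : B^∞). -/

import Mathlib

/-!
Since `⟨I(α)⟩ ⊆ I`, only `(I : B^∞) ⊆ (⟨I(α)⟩ : B^∞)` needs proof, and for that it
suffices to find one `m` with `gᵢ B^m ⊆ ⟨I(α)⟩` for every generator `gᵢ`. Multiplying `gᵢ` by a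
monomial of degree `α − deg gᵢ` lands in `I(α)`, so `gᵢ M_i ⊆ ⟨I(α)⟩`; and base-point
freeness, `(M_i : B^∞) = (1)`, says exactly that `B^n ⊆ M_i` for some `n`.
-/

namespace Ideal

variable {R : Type*} [CommSemiring R]

theorem iSup_colon_pow_mono {I J : Ideal R} (B : Ideal R) (h : J ≤ I) :
    ⨆ n : ℕ, J.colon ((B ^ n : Ideal R) : Set R) ≤
      ⨆ n : ℕ, I.colon ((B ^ n : Ideal R) : Set R) :=
  iSup_mono fun _ => Submodule.colon_mono h le_rfl

theorem monotone_colon_pow (J B : Ideal R) :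
    Monotone fun n : ℕ => J.colon ((B ^ n : Ideal R) : Set R) :=
  fun _ _ hnm => Submodule.colon_mono le_rfl (Ideal.pow_le_pow_right hnm)

theorem exists_pow_le_of_iSup_colon_pow_eq_top {M B : Ideal R}
    (h : ⨆ n : ℕ, M.colon ((B ^ n : Ideal R) : Set R) = ⊤) : ∃ n : ℕ, B ^ n ≤ M := by
  have h1 : (1 : R) ∈ ⨆ n : ℕ, M.colon ((B ^ n : Ideal R) : Set R) := by
    rw [h]; exact Submodule.mem_top
  obtain ⟨n, hn⟩ :=
    (Submodule.mem_iSup_of_directed _ (monotone_colon_pow M B).directed_le).mp h1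
  exact ⟨n, fun b hb => by simpa using Submodule.mem_colon.mp hn b hb⟩

theorem span_range_le_colon_pow {ι : Type*} [Finite ι] {f : ι → R} {J B : Ideal R}
    (h : ∀ i, ∃ n : ℕ, f i ∈ J.colon ((B ^ n : Ideal R) : Set R)) :
    ∃ m : ℕ, span (Set.range f) ≤ J.colon ((B ^ m : Ideal R) : Set R) := by
  choose n hn using h
  cases nonempty_fintype ι
  refine ⟨Finset.univ.sup n, span_le.mpr ?_⟩
  rintro _ ⟨i, rfl⟩
  exact monotone_colon_pow J B (Finset.le_sup (Finset.mem_univ i)) (hn i)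

theorem iSup_colon_pow_le_of_le_colon_pow {I J B : Ideal R} {m : ℕ}
    (h : I ≤ J.colon ((B ^ m : Ideal R) : Set R)) :
    ⨆ n : ℕ, I.colon ((B ^ n : Ideal R) : Set R) ≤
      ⨆ n : ℕ, J.colon ((B ^ n : Ideal R) : Set R) := by
  refine iSup_le fun n x hx => Submodule.mem_iSup_of_mem (n + m) ?_
  refine Submodule.mem_colon.mpr fun p hp => ?_
  rw [pow_add] at hp
  refine Submodule.mul_induction_on hp (fun a ha b hb => ?_) (fun u v hu hv => ?_)
  · rw [smul_eq_mul, ← mul_assoc]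
    exact Submodule.mem_colon.mp (h (Submodule.mem_colon.mp hx a ha)) b hb
  · rw [smul_add]
    exact J.add_mem hu hv

end Ideal

namespace MvPolynomial

variable {σ R A : Type*} [CommSemiring R] [AddCommGroup A]

theorem mem_colon_span_monomials_of_isWeightedHomogeneous {w : σ → A}
    {I : Ideal (MvPolynomial σ R)} {g : MvPolynomial σ R} {β : A} (hg : IsWeightedHomogeneous w g β) (hgI : g ∈ I) (α : A) :
    g ∈ (Ideal.span ((I : Set (MvPolynomial σ R)) ∩ weightedHomogeneousSubmodule R w α)).colon
      (Ideal.span {p : MvPolynomial σ R |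
        ∃ d : σ →₀ ℕ, p = monomial d 1 ∧ Finsupp.weight w d = α - β}) := by
  rw [Ideal.colon_span, Submodule.mem_colon]
  rintro _ ⟨d, rfl, hd⟩
  refine Ideal.subset_span ⟨I.mul_mem_right _ hgI, ?_⟩
  have := hg.mul (isWeightedHomogeneous_monomial w d 1 hd)
  rwa [add_sub_cancel] at this

end MvPolynomial

open MvPolynomial in
theorem stmt15_general {σ K A : Type*} [Field K] [AddCommGroup A] (w : σ → A)
    (t : ℕ) (g : Fin (t + 1) → MvPolynomial σ K) (dg : Fin (t + 1) → A)
    (hg : ∀ i, g i ∈ weightedHomogeneousSubmodule K w (dg i))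
    (I B : Ideal (MvPolynomial σ K)) (hI : I = Ideal.span (Set.range g)) (α : A)
    (hbpf : ∀ i, (⨆ n : ℕ, Submodule.colon
        (Ideal.span {p : MvPolynomial σ K | ∃ d : σ →₀ ℕ,
          p = monomial d 1 ∧ Finsupp.weight w d = α - dg i}) ((B ^ n : Ideal (MvPolynomial σ K)) : Set (MvPolynomial σ K))) = ⊤) :
    (⨆ n : ℕ, Submodule.colon
        (Ideal.span ((I : Set (MvPolynomial σ K)) ∩
          (weightedHomogeneousSubmodule K w α : Set (MvPolynomial σ K)))) ((B ^ n : Ideal (MvPolynomial σ K)) : Set (MvPolynomial σ K)))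
      = ⨆ n : ℕ, Submodule.colon I ((B ^ n : Ideal (MvPolynomial σ K)) : Set (MvPolynomial σ K)) := by
  have hgJ (i : Fin (t + 1)) : ∃ n : ℕ,
      g i ∈ (Ideal.span ((I : Set (MvPolynomial σ K)) ∩ weightedHomogeneousSubmodule K w α)).colon
        ((B ^ n : Ideal (MvPolynomial σ K)) : Set (MvPolynomial σ K)) := by
    obtain ⟨n, hn⟩ := Ideal.exists_pow_le_of_iSup_colon_pow_eq_top (hbpf i)
    have hgI : g i ∈ I := hI ▸ Ideal.subset_span ⟨i, rfl⟩
    exact ⟨n, Submodule.colon_mono le_rfl hn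
      (mem_colon_span_monomials_of_isWeightedHomogeneous (hg i) hgI α)⟩
  obtain ⟨m, hm⟩ := Ideal.span_range_le_colon_pow hgJ
  exact le_antisymm (Ideal.iSup_colon_pow_mono B (Ideal.span_le.mpr Set.inter_subset_left))
    (Ideal.iSup_colon_pow_le_of_le_colon_pow (hI.le.trans hm))

open MvPolynomial in
/-- Let `I = (g₀,…,g_t)` be a homogeneous ideal of a polynomial ring over a field, graded
by an abelian group `A` via weights `w`, and let `α ∈ A`.  If for each `i` the monomials of
degree `α − deg gᵢ` generate an ideal whose `B`-saturation is the unit ideal (base-point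
freeness of `|α − deg gᵢ|`), then the ideal generated by `I(α) = I ∩ S_α` has the same
`B`-saturation as `I`. -/
theorem stmt15 {σ K A : Type*} [Field K] [AddCommGroup A] (w : σ → A)
    (t : ℕ) (g : Fin (t + 1) → MvPolynomial σ K) (dg : Fin (t + 1) → A)
    (hg : ∀ i, g i ∈ weightedHomogeneousSubmodule K w (dg i)) (hg0 : ∀ i, g i ≠ 0)
    (I B : Ideal (MvPolynomial σ K)) (hI : I = Ideal.span (Set.range g)) (α : A)
    (hbpf : ∀ i, (⨆ n : ℕ, Submodule.colon
        (Ideal.span {p : MvPolynomial σ K | ∃ d : σ →₀ ℕ,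
          p = monomial d 1 ∧ Finsupp.weight w d = α - dg i}) ((B ^ n : Ideal (MvPolynomial σ K)) : Set (MvPolynomial σ K))) = ⊤) :
    (⨆ n : ℕ, Submodule.colon
        (Ideal.span ((I : Set (MvPolynomial σ K)) ∩
          (weightedHomogeneousSubmodule K w α : Set (MvPolynomial σ K)))) ((B ^ n : Ideal (MvPolynomial σ K)) : Set (MvPolynomial σ K)))
      = ⨆ n : ℕ, Submodule.colon I ((B ^ n : Ideal (MvPolynomial σ K)) : Set (MvPolynomial σ K)) :=
  stmt15_general w t g dg hg I B hI α hbpf
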